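/- (Theorem 1, series for the individual interference power, stated as an identity in [0,∞].) Fix real parameters q > 0, s ≥ 0, α > 0, m > 0, a disk radius R > 0, a receiver location with 0 < ‖v_0‖ < R, band edges f_s < f_e, a receiver frequency f_0 ∈ (f_s, f_e), and a measurable function Υ : [0,∞) → [0,∞). Set ω_min = min(f_e - f_0, f_0 - f_s) and ω_max = max(f_e - f_0, f_0 - f_s). Define the densities: f_H(h) = (m^m/Γ(m)) h^{m-1} e^{-m h} for h > 0; f_L(ℓ) = 2ℓ/R² for 0 < ℓ ≤ R - ‖v_0‖ and f_L(ℓ) = (2ℓ/(πR²)) arccos((‖v_0‖² - R² + ℓ²)/(2ℓ‖v_0‖)) for R - ‖v_0‖ < ℓ ≤ R + ‖v_0‖; and f_Ω(ω) = 2/(f_e - f_s) for 0 < ω ≤ ω_min and f_Ω(ω) = 1/(f_e - f_s) for ω_min < ω ≤ ω_max. Then the triple Lebesgue integral ∫_0^∞ ∫_0^{R+‖v_0‖} ∫_0^{ω_max} e^{s q h ℓ^{-α} Υ(ω)} f_Ω(ω) f_L(ℓ) f_H(h) dω dℓ dh, taken in the extended nonnegative reals, equals ∑_{n=0}^{∞}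 [(q s)^n / n!] · [m^{-n} Γ(n+m)/Γ(m)] · [2 γ_n κ_n / (R² (f_e - f_s))], where γ_n = ∫_0^{ω_min} Υ(ω)^n dω + ∫_0^{ω_max} Υ(ω)^n dω and κ_n = ∫_0^{R-‖v_0‖} ℓ^{1-nα} dℓ + ∫_{R-‖v_0‖}^{R+‖v_0‖} (ℓ^{1-nα}/π) arccos((‖v_0‖² - R² + ℓ²)/(2ℓ‖v_0‖)) dℓ, with both sides possibly equal to +∞. -/

import Mathlib

/-!
Expanding the exponential into its power series writes the integrand as a series of
nonnegative terms `((q s)^n / n!) · (h^n f_H(h)) · (ℓ^{-nα} f_L(ℓ)) · (Υ(ω)^n f_Ω(ω))`, so by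
Tonelli the triple integral is the series of the products of three one-dimensional integrals.
The `h`-integral is the `n`-th moment `m^{-n} Γ(n+m)/Γ(m)` of the Gamma law; the other two
split where the piecewise densities change, at `ω_min` and at `R - ‖v₀‖`.
-/

open MeasureTheory Real Set
open scoped ENNReal Nat

theorem ENNReal.ofReal_exp_eq_tsum {x : ℝ} (hx : 0 ≤ x) :
    ENNReal.ofReal (exp x) = ∑' n : ℕ, ENNReal.ofReal (x ^ n / n !) := by
  rw [exp_eq_exp_ℝ, NormedSpace.exp_eq_tsum_div,
    ENNReal.ofReal_tsum_of_nonneg (fun n => by positivity) (Real.summable_pow_div_factorial x)]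

theorem ofReal_exp_mul_mul_mul_eq_tsum {k a b c u v w : ℝ} (hk : 0 ≤ k) (ha : 0 ≤ a)
    (hb : 0 ≤ b) (hc : 0 ≤ c) (hu : 0 ≤ u) (hv : 0 ≤ v) :
    ENNReal.ofReal (exp (k * a * b * c) * u * v * w)
      = ∑' n : ℕ, ENNReal.ofReal (k ^ n / n !) * ENNReal.ofReal (a ^ n * w)
          * ENNReal.ofReal (b ^ n * v) * ENNReal.ofReal (c ^ n * u) := by
  rw [ENNReal.ofReal_mul (by positivity), ENNReal.ofReal_mul (by positivity),
    ENNReal.ofReal_mul (by positivity), ENNReal.ofReal_exp_eq_tsum (by positivity),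
    ← ENNReal.tsum_mul_right, ← ENNReal.tsum_mul_right, ← ENNReal.tsum_mul_right]
  refine tsum_congr fun n => ?_
  rw [mul_pow, mul_pow, mul_pow, show (k ^ n * a ^ n * b ^ n * c ^ n) / n !
      = k ^ n / n ! * a ^ n * b ^ n * c ^ n by ring, ENNReal.ofReal_mul (by positivity),
    ENNReal.ofReal_mul (by positivity), ENNReal.ofReal_mul (by positivity)]
  simp only [ENNReal.ofReal_mul, ha, hb, hc, pow_nonneg]
  ring

section Tonelli

variable {α β γ : Type*} [MeasurableSpace α] [MeasurableSpace β] [MeasurableSpace γ]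
  {μ : Measure α} {ν : Measure β} {ρ : Measure γ}

theorem lintegral_tsum_const_mul (a : ℕ → ℝ≥0∞) {u : ℕ → β → ℝ≥0∞}
    (hu : ∀ n, AEMeasurable (u n) ν) :
    ∫⁻ y, ∑' n, a n * u n y ∂ν = ∑' n, a n * ∫⁻ y, u n y ∂ν := by
  rw [lintegral_tsum fun n => (hu n).const_mul (a n)]
  exact tsum_congr fun n => lintegral_const_mul'' _ (hu n)

theorem lintegral_lintegral_lintegral_tsum_mul (c : ℕ → ℝ≥0∞) {f : ℕ → α → ℝ≥0∞}
    {g : ℕ → β → ℝ≥0∞} {h : ℕ → γ → ℝ≥0∞} (hf : ∀ n, AEMeasurable (f n) μ)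
    (hg : ∀ n, AEMeasurable (g n) ν) (hh : ∀ n, AEMeasurable (h n) ρ) :
    ∫⁻ x, ∫⁻ y, ∫⁻ z, ∑' n, c n * f n x * g n y * h n z ∂ρ ∂ν ∂μ
      = ∑' n, c n * (∫⁻ x, f n x ∂μ) * (∫⁻ y, g n y ∂ν) * ∫⁻ z, h n z ∂ρ := by
  simp_rw [lintegral_tsum_const_mul _ hh, mul_right_comm _ (g _ _),
    lintegral_tsum_const_mul _ hg, mul_right_comm _ (f _ _), lintegral_tsum_const_mul _ hf]
  exact tsum_congr fun n => by ring

theorem lintegral_lintegral_lintegral_ofReal_exp_mul_eq_tsum {X w : α → ℝ} {Y v : β → ℝ}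
    {Z u : γ → ℝ} {k : ℝ} (hk : 0 ≤ k)
    (hX : AEMeasurable X μ) (hw : AEMeasurable w μ) (hY : AEMeasurable Y ν)
    (hv : AEMeasurable v ν) (hZ : AEMeasurable Z ρ) (hu : AEMeasurable u ρ)
    (hX₀ : ∀ᵐ x ∂μ, 0 ≤ X x) (hY₀ : ∀ᵐ y ∂ν, 0 ≤ Y y)
    (hv₀ : ∀ᵐ y ∂ν, 0 ≤ v y) (hZ₀ : ∀ᵐ z ∂ρ, 0 ≤ Z z) (hu₀ : ∀ᵐ z ∂ρ, 0 ≤ u z) :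
    ∫⁻ x, ∫⁻ y, ∫⁻ z, ENNReal.ofReal (exp (k * X x * Y y * Z z) * u z * v y * w x) ∂ρ ∂ν ∂μ
      = ∑' n : ℕ, ENNReal.ofReal (k ^ n / n !) * (∫⁻ x, ENNReal.ofReal (X x ^ n * w x) ∂μ)
          * (∫⁻ y, ENNReal.ofReal (Y y ^ n * v y) ∂ν)
          * ∫⁻ z, ENNReal.ofReal (Z z ^ n * u z) ∂ρ := by
  refine (lintegral_congr_ae ?_).trans (lintegral_lintegral_lintegral_tsum_mul _
    (fun n => by fun_prop) (fun n => by fun_prop) (fun n => by fun_prop))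
  filter_upwards [hX₀] with x hXx
  refine lintegral_congr_ae ?_
  filter_upwards [hY₀, hv₀] with y hYy hvy
  refine lintegral_congr_ae ?_
  filter_upwards [hZ₀, hu₀] with z hZz huz
  exact ofReal_exp_mul_mul_mul_eq_tsum hk hXx hYy hZz huz hvy

end Tonelli

theorem setLIntegral_Ioi_pow_mul_gamma_density (n : ℕ) {a r : ℝ} (ha : 0 < a) (hr : 0 < r) :
    ∫⁻ x in Ioi 0, ENNReal.ofReal (x ^ n * (r ^ a / Gamma a * x ^ (a - 1) * exp (-(r * x))))
      = ENNReal.ofReal (r ^ (-(n : ℝ)) * Gamma (n + a) / Gamma a) := by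
  have hna : 0 < n + a := by positivity
  have hpow : ∀ x ∈ Ioi (0 : ℝ), x ^ n * (r ^ a / Gamma a * x ^ (a - 1) * exp (-(r * x)))
      = r ^ a / Gamma a * (x ^ (n + a - 1) * exp (-(r * x))) := fun x hx => by
    rw [add_sub_assoc, rpow_add hx, rpow_natCast]; ring
  have hint : IntegrableOn (fun x : ℝ => x ^ (n + a - 1) * exp (-(r * x))) (Ioi 0) := by
    simpa [rpow_one] using integrableOn_rpow_mul_exp_neg_mul_rpow (p := 1) (by linarith) one_pos hr
  rw [setLIntegral_congr_fun measurableSet_Ioi fun x hx => congrArg ENNReal.ofReal (hpow x hx),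
    ← ofReal_integral_eq_lintegral_ofReal (hint.const_mul _)
      ((ae_restrict_iff' measurableSet_Ioi).mpr (ae_of_all _ fun x (hx : 0 < x) => by positivity)),
    integral_const_mul, integral_rpow_mul_exp_neg_mul_Ioi hna hr]
  congr 1
  have hr_pow : r ^ a * r ^ (-(n + a)) = r ^ (-(n : ℝ)) := by rw [← rpow_add hr]; ring_nf
  rw [one_div, inv_rpow hr.le, ← rpow_neg hr.le, ← hr_pow]
  ring

theorem setLIntegral_Ioc_ite_le {f g : ℝ → ℝ≥0∞} {a b c : ℝ} (hac : a ≤ c) (hcb : c ≤ b) :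
    ∫⁻ x in Ioc a b, (if x ≤ c then f x else g x)
      = (∫⁻ x in Ioc a c, f x) + ∫⁻ x in Ioc c b, g x := by
  rw [← Ioc_union_Ioc_eq_Ioc hac hcb,
    lintegral_union measurableSet_Ioc (Ioc_disjoint_Ioc_of_le le_rfl),
    setLIntegral_congr_fun measurableSet_Ioc fun x hx => if_pos hx.2,
    setLIntegral_congr_fun measurableSet_Ioc fun x hx => if_neg (not_le.mpr hx.1)]

theorem setLIntegral_Ioc_ofReal_mul_step_density {f : ℝ → ℝ} {a b d : ℝ} (ha : 0 ≤ a)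
    (hab : a ≤ b) (hd : 0 ≤ d) :
    ∫⁻ x in Ioc 0 b, ENNReal.ofReal (f x * if x ≤ a then 2 / d else 1 / d)
      = ENNReal.ofReal (1 / d)
          * ((∫⁻ x in Ioc 0 a, ENNReal.ofReal (f x)) + ∫⁻ x in Ioc 0 b, ENNReal.ofReal (f x)) := by
  have h_two : ENNReal.ofReal (2 / d) = ENNReal.ofReal (1 / d) + ENNReal.ofReal (1 / d) := by
    rw [← ENNReal.ofReal_add (by positivity) (by positivity)]; ring_nf
  simp_rw [mul_ite, apply_ite ENNReal.ofReal, ENNReal.ofReal_mul' (by positivity : 0 ≤ 2 / d),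
    ENNReal.ofReal_mul' (by positivity : 0 ≤ 1 / d)]
  rw [setLIntegral_Ioc_ite_le ha hab, ← Ioc_union_Ioc_eq_Ioc ha hab,
    lintegral_union measurableSet_Ioc (Ioc_disjoint_Ioc_of_le le_rfl),
    lintegral_mul_const' _ _ ENNReal.ofReal_ne_top, lintegral_mul_const' _ _ ENNReal.ofReal_ne_top,
    h_two]
  ring

theorem setLIntegral_Ioc_rpow_pow_mul_distance_density (n : ℕ) {α R v : ℝ} (hv : 0 ≤ v)
    (hvR : v ≤ R) :
    ∫⁻ ℓ in Ioc 0 (R + v), ENNReal.ofReal ((ℓ ^ (-α)) ^ n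
        * if ℓ ≤ R - v then 2 * ℓ / R ^ 2
          else 2 * ℓ / (π * R ^ 2) * arccos ((v ^ 2 - R ^ 2 + ℓ ^ 2) / (2 * ℓ * v)))
      = ENNReal.ofReal (2 / R ^ 2)
          * ((∫⁻ ℓ in Ioc 0 (R - v), ENNReal.ofReal (ℓ ^ (1 - n * α)))
            + ∫⁻ ℓ in Ioc (R - v) (R + v),
                ENNReal.ofReal (ℓ ^ (1 - n * α) / π
                  * arccos ((v ^ 2 - R ^ 2 + ℓ ^ 2) / (2 * ℓ * v)))) := by
  have hRv : 0 ≤ R - v := by linarith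
  have hpow : ∀ ℓ : ℝ, 0 < ℓ → ℓ * (ℓ ^ (-α)) ^ n = ℓ ^ (1 - n * α) := fun ℓ hℓ => by
    rw [← rpow_natCast, ← rpow_mul hℓ.le, sub_eq_add_neg, rpow_add hℓ, rpow_one]; ring_nf
  simp_rw [mul_ite, apply_ite ENNReal.ofReal]
  rw [setLIntegral_Ioc_ite_le hRv (by linarith), mul_add,
    ← lintegral_const_mul' _ _ ENNReal.ofReal_ne_top,
    ← lintegral_const_mul' _ _ ENNReal.ofReal_ne_top]
  congr 1 <;> refine setLIntegral_congr_fun measurableSet_Ioc fun ℓ hℓ => ?_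
  · rw [← ENNReal.ofReal_mul (by positivity), ← hpow ℓ hℓ.1]
    ring_nf
  · rw [← ENNReal.ofReal_mul (by positivity), ← hpow ℓ (hRv.trans_lt hℓ.1)]
    ring_nf

theorem mgf_individual_interference_series_general
    (q s α m R v0 fs fe f0 : ℝ) (Υ : ℝ → ℝ)
    (hq : 0 < q) (hs : 0 ≤ s) (hm : 0 < m)
    (hv0 : 0 < v0) (hv0R : v0 < R) (hf0 : f0 ∈ Set.Ioo fs fe)
    (hΥmeas : Measurable Υ) (hΥnn : ∀ ω, 0 ≤ Υ ω) :
    (∫⁻ h in Set.Ioi (0:ℝ),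
      ∫⁻ ℓ in Set.Ioc (0:ℝ) (R + v0),
        ∫⁻ ω in Set.Ioc (0:ℝ) (max (fe - f0) (f0 - fs)),
          ENNReal.ofReal
            (Real.exp (s * q * h * ℓ ^ (-α) * Υ ω)
              * (if ω ≤ min (fe - f0) (f0 - fs) then 2 / (fe - fs) else 1 / (fe - fs))
              * (if ℓ ≤ R - v0 then 2 * ℓ / R ^ 2
                 else 2 * ℓ / (π * R ^ 2)
                   * Real.arccos ((v0 ^ 2 - R ^ 2 + ℓ ^ 2) / (2 * ℓ * v0)))
              * (m ^ m / Real.Gamma m * h ^ (m - 1) * Real.exp (-(m * h)))))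
    = ∑' n : ℕ,
        ENNReal.ofReal ((q * s) ^ n / (n.factorial : ℝ)
            * (m ^ (-(n : ℝ)) * Real.Gamma ((n : ℝ) + m) / Real.Gamma m)
            * (2 / (R ^ 2 * (fe - fs))))
        * ((∫⁻ ω in Set.Ioc (0:ℝ) (min (fe - f0) (f0 - fs)), ENNReal.ofReal (Υ ω ^ n))
            + ∫⁻ ω in Set.Ioc (0:ℝ) (max (fe - f0) (f0 - fs)), ENNReal.ofReal (Υ ω ^ n))
        * ((∫⁻ ℓ in Set.Ioc (0:ℝ) (R - v0), ENNReal.ofReal (ℓ ^ (1 - (n : ℝ) * α)))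
            + ∫⁻ ℓ in Set.Ioc (R - v0) (R + v0),
                ENNReal.ofReal (ℓ ^ (1 - (n : ℝ) * α) / π
                  * Real.arccos ((v0 ^ 2 - R ^ 2 + ℓ ^ 2) / (2 * ℓ * v0)))) := by
  obtain ⟨hfs, hfe⟩ := hf0
  have hband : 0 ≤ fe - fs := by linarith
  have hmin : 0 ≤ min (fe - f0) (f0 - fs) := le_min (by linarith) (by linarith)
  rw [lintegral_lintegral_lintegral_ofReal_exp_mul_eq_tsum (mul_nonneg hs hq.le)
    (hX := by fun_prop) (hw := by fun_prop) (hY := by fun_prop) (hZ := by fun_prop)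
    (hv := (Measurable.ite measurableSet_Iic (by fun_prop) (by fun_prop)).aemeasurable)
    (hu := (Measurable.ite measurableSet_Iic measurable_const measurable_const).aemeasurable)
    (hX₀ := ae_restrict_of_forall_mem measurableSet_Ioi fun h (hh : 0 < h) => hh.le)
    (hY₀ := ae_restrict_of_forall_mem measurableSet_Ioc fun ℓ hℓ => rpow_nonneg hℓ.1.le _)
    (hv₀ := ae_restrict_of_forall_mem measurableSet_Ioc fun ℓ hℓ => by
      have hℓ₀ : 0 < ℓ := hℓ.1
      split_ifs
      exacts [by positivity, mul_nonneg (by positivity) (arccos_nonneg _)])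
    (hZ₀ := ae_of_all _ hΥnn) (hu₀ := ae_of_all _ fun ω => by split_ifs <;> positivity)]
  refine tsum_congr fun n => ?_
  rw [setLIntegral_Ioi_pow_mul_gamma_density n hm hm,
    setLIntegral_Ioc_ofReal_mul_step_density hmin min_le_max hband,
    setLIntegral_Ioc_rpow_pow_mul_distance_density n hv0.le hv0R.le,
    show 2 / (R ^ 2 * (fe - fs)) = 2 / R ^ 2 * (1 / (fe - fs)) by
      rw [div_mul_div_comm, mul_one], mul_comm q s]
  rw [← mul_assoc, ENNReal.ofReal_mul (by positivity), ENNReal.ofReal_mul (by positivity),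
    ENNReal.ofReal_mul (by positivity)]
  ring

/-- Theorem 1, series form of the MGF-type integral of the individual interference power,
stated as an identity in `[0,∞]`.  The triple Lebesgue integral of
`e^{s q h ℓ^{-α} Υ(ω)} f_Ω(ω) f_L(ℓ) f_H(h)` over `(h, ℓ, ω)` equals
`∑_{n≥0} ((qs)^n/n!) (m^{-n} Γ(n+m)/Γ(m)) (2 γ_n κ_n / (R² (f_e - f_s)))`,
where `f_H` is the Nakagami-`m` power (Gamma) density, `f_L` the BPP distance density on
the disk of radius `R` seen from a receiver at distance `‖v₀‖` from the center, and `f_Ω`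
the piecewise-uniform spectral-distance density on the band `[f_s, f_e]`. -/
theorem mgf_individual_interference_series
    (q s α m R v0 fs fe f0 : ℝ) (Υ : ℝ → ℝ)
    (hq : 0 < q) (hs : 0 ≤ s) (hα : 0 < α) (hm : 0 < m) (hR : 0 < R)
    (hv0 : 0 < v0) (hv0R : v0 < R) (hfsfe : fs < fe) (hf0 : f0 ∈ Set.Ioo fs fe)
    (hΥmeas : Measurable Υ) (hΥnn : ∀ ω, 0 ≤ Υ ω) :
    (∫⁻ h in Set.Ioi (0:ℝ),
      ∫⁻ ℓ in Set.Ioc (0:ℝ) (R + v0),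
        ∫⁻ ω in Set.Ioc (0:ℝ) (max (fe - f0) (f0 - fs)),
          ENNReal.ofReal
            (Real.exp (s * q * h * ℓ ^ (-α) * Υ ω)
              * (if ω ≤ min (fe - f0) (f0 - fs) then 2 / (fe - fs) else 1 / (fe - fs))
              * (if ℓ ≤ R - v0 then 2 * ℓ / R ^ 2
                 else 2 * ℓ / (π * R ^ 2)
                   * Real.arccos ((v0 ^ 2 - R ^ 2 + ℓ ^ 2) / (2 * ℓ * v0)))
              * (m ^ m / Real.Gamma m * h ^ (m - 1) * Real.exp (-(m * h)))))
    = ∑' n : ℕ,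
        ENNReal.ofReal ((q * s) ^ n / (n.factorial : ℝ)
            * (m ^ (-(n : ℝ)) * Real.Gamma ((n : ℝ) + m) / Real.Gamma m)
            * (2 / (R ^ 2 * (fe - fs))))
        * ((∫⁻ ω in Set.Ioc (0:ℝ) (min (fe - f0) (f0 - fs)), ENNReal.ofReal (Υ ω ^ n))
            + ∫⁻ ω in Set.Ioc (0:ℝ) (max (fe - f0) (f0 - fs)), ENNReal.ofReal (Υ ω ^ n))
        * ((∫⁻ ℓ in Set.Ioc (0:ℝ) (R - v0), ENNReal.ofReal (ℓ ^ (1 - (n : ℝ) * α)))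
            + ∫⁻ ℓ in Set.Ioc (R - v0) (R + v0),
                ENNReal.ofReal (ℓ ^ (1 - (n : ℝ) * α) / π
                  * Real.arccos ((v0 ^ 2 - R ^ 2 + ℓ ^ 2) / (2 * ℓ * v0)))) :=
  mgf_individual_interference_series_general q s α m R v0 fs fe f0 Υ hq hs hm hv0 hv0R hf0 hΥmeas
    hΥnn
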